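/- Monotonicity of the normalized compatibility constant (Lemma A.5): Let Σ be a symmetric positive semidefinite N×N real matrix and let ∅ ≠ S_λ ⊆ S_0 ⊆ {1,…,N}. Then φ²_Σ(S_0)/|S_0| ≤ φ²_Σ(S_λ)/|S_λ|. -/

import Mathlib

/-! Every `z` in the cone of `S_λ` also lies in the cone of `S_0 ⊇ S_λ`, and
`‖z_{S_λ}‖₁ ≤ ‖z_{S_0}‖₁`; hence `zᵀΣz / ‖z_{S_0}‖₁² ≤ zᵀΣz / ‖z_{S_λ}‖₁²`, and taking the infimum
over the cone of `S_λ` gives the claim. -/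

open Finset

/-- The compatibility constant
`φ²_Σ(S) = inf { |S|·(zᵀΣz)/‖z_S‖₁² : ‖z_{Sᶜ}‖₁ ≤ 3‖z_S‖₁, z_S ≠ 0 }`. -/
noncomputable def compatConst {N : ℕ} (Sig : Matrix (Fin N) (Fin N) ℝ)
    (S : Finset (Fin N)) : ℝ :=
  sInf { q : ℝ | ∃ z : Fin N → ℝ,
    (∑ j ∈ Sᶜ, |z j|) ≤ 3 * ∑ j ∈ S, |z j| ∧ (∑ j ∈ S, |z j|) ≠ 0 ∧
    q = (S.card : ℝ) * (∑ i, ∑ k, z i * Sig i k * z k) / (∑ j ∈ S, |z j|) ^ 2 }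

section

variable {N : ℕ} {Sig : Matrix (Fin N) (Fin N) ℝ} {S T : Finset (Fin N)} {z : Fin N → ℝ}

theorem compatConst_div_card_le (hPSD : ∀ z : Fin N → ℝ, 0 ≤ ∑ i, ∑ k, z i * Sig i k * z k)
    (hcone : ∑ j ∈ Sᶜ, |z j| ≤ 3 * ∑ j ∈ S, |z j|) (hz : ∑ j ∈ S, |z j| ≠ 0) :
    compatConst Sig S / S.card ≤ (∑ i, ∑ k, z i * Sig i k * z k) / (∑ j ∈ S, |z j|) ^ 2 := by
  have hcard : (0 : ℝ) < S.card := by exact_mod_cast (nonempty_of_sum_ne_zero hz).card_pos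
  rw [div_le_iff₀ hcard, div_mul_eq_mul_div, mul_comm]
  refine csInf_le ⟨0, ?_⟩ ⟨z, hcone, hz, rfl⟩
  rintro q ⟨w, -, -, rfl⟩
  have := hPSD w
  positivity

theorem le_compatConst_div_card (hS : S.Nonempty) {c : ℝ}
    (h : ∀ z : Fin N → ℝ, ∑ j ∈ Sᶜ, |z j| ≤ 3 * ∑ j ∈ S, |z j| → ∑ j ∈ S, |z j| ≠ 0 →
      c ≤ (∑ i, ∑ k, z i * Sig i k * z k) / (∑ j ∈ S, |z j|) ^ 2) :
    c ≤ compatConst Sig S / S.card := by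
  have hcard : (0 : ℝ) < S.card := by exact_mod_cast hS.card_pos
  rw [le_div_iff₀ hcard]
  refine le_csInf ⟨_, fun j ↦ if j ∈ S then 1 else 0, ?_, ?_, rfl⟩ ?_
  · rw [sum_eq_zero fun j hj ↦ by simp [mem_compl.mp hj]]
    positivity
  · simp [apply_ite, hS.ne_empty]
  · rintro q ⟨w, hcone, hw, rfl⟩
    rw [mul_div_assoc, mul_comm]
    exact mul_le_mul_of_nonneg_left (h w hcone hw) hcard.le

theorem sum_abs_compl_le_of_subset (hsub : T ⊆ S)
    (hcone : ∑ j ∈ Tᶜ, |z j| ≤ 3 * ∑ j ∈ T, |z j|) :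
    ∑ j ∈ Sᶜ, |z j| ≤ 3 * ∑ j ∈ S, |z j| :=
  calc ∑ j ∈ Sᶜ, |z j| ≤ ∑ j ∈ Tᶜ, |z j| :=
        sum_le_sum_of_subset_of_nonneg (compl_subset_compl.mpr hsub) fun _ _ _ ↦ abs_nonneg _
    _ ≤ 3 * ∑ j ∈ T, |z j| := hcone
    _ ≤ 3 * ∑ j ∈ S, |z j| := by gcongr

end

theorem compatConst_normalized_mono_general
    {N : ℕ} (Sig : Matrix (Fin N) (Fin N) ℝ)
    (hPSD : ∀ z : Fin N → ℝ, 0 ≤ ∑ i, ∑ k, z i * Sig i k * z k)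
    (Slam S0 : Finset (Fin N)) (hne : Slam.Nonempty) (hsub : Slam ⊆ S0) :
    compatConst Sig S0 / (S0.card : ℝ) ≤ compatConst Sig Slam / (Slam.card : ℝ) := by
  refine le_compatConst_div_card hne fun z hcone hz ↦ ?_
  have hpos : 0 < ∑ j ∈ Slam, |z j| := (sum_nonneg fun _ _ ↦ abs_nonneg _).lt_of_ne' hz
  have hle : ∑ j ∈ Slam, |z j| ≤ ∑ j ∈ S0, |z j| :=
    sum_le_sum_of_subset_of_nonneg hsub fun _ _ _ ↦ abs_nonneg _
  calc compatConst Sig S0 / S0.card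
      ≤ (∑ i, ∑ k, z i * Sig i k * z k) / (∑ j ∈ S0, |z j|) ^ 2 :=
        compatConst_div_card_le hPSD (sum_abs_compl_le_of_subset hsub hcone)
          (hpos.trans_le hle).ne'
    _ ≤ (∑ i, ∑ k, z i * Sig i k * z k) / (∑ j ∈ Slam, |z j|) ^ 2 := by
        gcongr
        exact hPSD z

/-- **Monotonicity of the normalized compatibility constant (Lemma A.5).**
For `∅ ≠ S_λ ⊆ S_0`, one has `φ²_Σ(S_0)/|S_0| ≤ φ²_Σ(S_λ)/|S_λ|`. -/
theorem compatConst_normalized_mono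
    {N : ℕ} (Sig : Matrix (Fin N) (Fin N) ℝ)
    (hSymm : Sig.IsSymm)
    (hPSD : ∀ z : Fin N → ℝ, 0 ≤ ∑ i, ∑ k, z i * Sig i k * z k)
    (Slam S0 : Finset (Fin N)) (hne : Slam.Nonempty) (hsub : Slam ⊆ S0) :
    compatConst Sig S0 / (S0.card : ℝ) ≤ compatConst Sig Slam / (Slam.card : ℝ) :=
  compatConst_normalized_mono_general Sig hPSD Slam S0 hne hsub
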